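/- (Anyon–Bose expansion of the reduced density matrix, ordering $O_+$.) Let $\kappa \in \mathbb{R}$, $L>0$, $V = [-L/2, L/2]$, $N \ge n \ge 1$, and let $\chi: \mathbb{R}^N \to \mathbb{C}$ be continuous and totally symmetric. Let $x_1 < x_1' < \cdots < x_n < x_n'$ be points of $V$ and set $I_+ = [x_1,x_1'] \cup \cdots \cup [x_n,x_n']$. Define $\chi^a = A_\kappa\, \chi$ and the statistics constant $C_+ = A_{-\kappa}(x_1',\dots,x_n')\, A_\kappa(x_1,\dots,x_n)$. Then $\int_{V^{N-n}} \overline{\chi^a(z_1,\dots,z_{N-n}, x_1',\dots,x_n')}\, \chi^a(z_1,\dots,z_{N-n}, x_1,\dots,x_n)\, dz = C_+ \sum_{j=0}^{N-n} (-1)^j (1 - e^{i\pi\kappa})^j \binom{N-n}{j} \int_{I_+^{\,j}} dw \int_{V^{N-n-j}} dz\, \overline{\chi(w_1,\dots,w_j, z_1,\dots,z_{N-n-j}, x_1',\dots,x_n')}\, \chi(w_1,\dots,w_j, z_1,\dots,z_{N-n-j}, x_1,\dots,x_n)$. -/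

import Mathlib

open MeasureTheory

/-- The statistics factor `A_κ(z₁,…,z_N) = exp(iπκ ∑_{j<k} ε(z_j - z_k)/2)`. -/
noncomputable def Afac (κ : ℝ) {N : ℕ} (z : Fin N → ℝ) : ℂ :=
  Complex.exp (Complex.I * Real.pi * κ *
    (∑ j : Fin N, ∑ k ∈ Finset.univ.filter (fun k => j < k), Real.sign (z j - z k)) / 2)

/-!
Splitting the pairs of coordinates of `Fin.append z x` into pairs inside `z`, pairs inside `x`
and mixed pairs, `A_{-κ}(z, x') A_κ(z, x)` is `C₊` times
`∏ᵢ exp (iπκ/2 · ∑ₗ (ε(zᵢ - xₗ) - ε(zᵢ - x'ₗ)))`. Off the null set where some `zᵢ` is an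
endpoint, the inner sum is `2 · 1_{I₊}(zᵢ)` because the intervals `[xₗ, x'ₗ]` are disjoint, so
each factor is `1 + (e^{iπκ} - 1) 1_{I₊}(zᵢ)`. Expanding the product over subsets `t` of the
coordinates, the term of `t` is the integral over the box with `I₊` in the coordinates of `t` and
`V` in the others; by the symmetry of `χ` it depends only on `#t`, and grouping the subsets by
cardinality produces the binomial coefficients.
-/

open Finset Complex Function

noncomputable def signSum {N : ℕ} (z : Fin N → ℝ) : ℝ :=
  ∑ j : Fin N, ∑ k ∈ univ.filter (fun k => j < k), Real.sign (z j - z k)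

lemma Afac_eq_exp_signSum (κ : ℝ) {N : ℕ} (z : Fin N → ℝ) :
    Afac κ z = exp (I * Real.pi * κ * signSum z / 2) :=
  rfl

lemma conj_Afac (κ : ℝ) {N : ℕ} (z : Fin N → ℝ) :
    (starRingEnd ℂ) (Afac κ z) = Afac (-κ) z := by
  rw [Afac_eq_exp_signSum, Afac_eq_exp_signSum, ← exp_conj]
  simp only [map_div₀, map_mul, conj_I, conj_ofReal, map_ofNat, ofReal_neg]
  ring_nf

lemma signSum_append {m n : ℕ} (z : Fin m → ℝ) (x : Fin n → ℝ) :
    signSum (Fin.append z x) =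
      signSum z + signSum x + ∑ i, ∑ l, Real.sign (z i - x l) := by
  simp only [signSum, sum_filter, Fin.sum_univ_add, Fin.append_left, Fin.append_right, Fin.lt_def,
    Fin.val_castAdd, Fin.val_natAdd, Nat.add_lt_add_iff_left, sum_add_distrib]
  have cross : ∀ i : Fin m, ∀ l : Fin n, (i : ℕ) < m + l := fun i l => by omega
  have cross' : ∀ i : Fin m, ∀ l : Fin n, ¬ m + (l : ℕ) < i := fun i l => by omega
  simp only [cross, cross', if_true, if_false, sum_const_zero]
  ring

lemma Afac_neg_append_mul_Afac_append (κ : ℝ) {m n : ℕ} (z : Fin m → ℝ) (x x' : Fin n → ℝ) :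
    Afac (-κ) (Fin.append z x') * Afac κ (Fin.append z x) =
      Afac (-κ) x' * Afac κ x *
        ∏ i, exp (I * Real.pi * κ *
          (∑ l, (Real.sign (z i - x l) - Real.sign (z i - x' l)) : ℝ) / 2) := by
  simp only [Afac_eq_exp_signSum, ← exp_sum, ← exp_add, signSum_append]
  congr 1
  push_cast
  simp only [← sum_div, ← mul_sum, sum_sub_distrib]
  ring

lemma sign_sub_sub_sign_sub_eq_indicator_Icc {a b y : ℝ} (hab : a < b) (ha : y ≠ a)
    (hb : y ≠ b) :
    Real.sign (y - a) - Real.sign (y - b) = (Set.Icc a b).indicator (fun _ => 2) y := by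
  rcases lt_or_gt_of_ne ha with hya | hya
  · rw [Set.indicator_of_notMem (fun h => (h.1.trans_lt hya).false),
      Real.sign_of_neg (by linarith), Real.sign_of_neg (by linarith)]
    norm_num
  rcases lt_or_gt_of_ne hb with hyb | hyb
  · rw [Set.indicator_of_mem (Set.mem_Icc.2 ⟨hya.le, hyb.le⟩), Real.sign_of_pos (by linarith),
      Real.sign_of_neg (by linarith)]
    norm_num
  · rw [Set.indicator_of_notMem (fun h => (h.2.trans_lt hyb).false),
      Real.sign_of_pos (by linarith), Real.sign_of_pos (by linarith)]
    norm_num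

lemma pairwise_disjoint_Icc_of_chain {n : ℕ} {x x' : Fin n → ℝ}
    (hchain : ∀ j k : Fin n, j < k → x' j < x k) :
    Pairwise (Disjoint on (fun l => Set.Icc (x l) (x' l))) :=
  pairwise_disjoint_on _ |>.2 fun j k hjk =>
    Set.disjoint_left.2 fun _ hj hk => (hj.2.trans_lt ((hchain j k hjk).trans_le hk.1)).false

lemma sum_sign_sub_sign_eq_indicator_iUnion {n : ℕ} {x x' : Fin n → ℝ} (hxx' : ∀ l, x l < x' l)
    (hchain : ∀ j k : Fin n, j < k → x' j < x k) {y : ℝ} (hy : ∀ l, y ≠ x l ∧ y ≠ x' l) :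
    ∑ l, (Real.sign (y - x l) - Real.sign (y - x' l)) =
      (⋃ l, Set.Icc (x l) (x' l)).indicator (fun _ => 2) y := by
  have h := indicator_biUnion_apply univ (fun l => Set.Icc (x l) (x' l))
    (f := fun _ => (2 : ℝ)) ((pairwise_disjoint_Icc_of_chain hchain).set_pairwise _) y
  simp only [mem_univ, Set.iUnion_true] at h
  rw [h]
  exact sum_congr rfl fun l _ => sign_sub_sub_sign_sub_eq_indicator_Icc (hxx' l) (hy l).1 (hy l).2

lemma exp_mul_indicator_two_div_two (a : ℂ) (s : Set ℝ) (y : ℝ) :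
    exp (a * (s.indicator (fun _ => (2 : ℝ)) y : ℝ) / 2) = 1 + (exp a - 1) * s.indicator 1 y := by
  by_cases hy : y ∈ s <;> simp [hy]

lemma Afac_neg_append_mul_Afac_append_of_chain (κ : ℝ) {m n : ℕ} (z : Fin m → ℝ)
    {x x' : Fin n → ℝ} (hxx' : ∀ l, x l < x' l) (hchain : ∀ j k : Fin n, j < k → x' j < x k)
    (hz : ∀ i l, z i ≠ x l ∧ z i ≠ x' l) :
    Afac (-κ) (Fin.append z x') * Afac κ (Fin.append z x) =
      Afac (-κ) x' * Afac κ x *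
        ∏ i, (1 + (exp (I * Real.pi * κ) - 1) *
          (⋃ l, Set.Icc (x l) (x' l)).indicator 1 (z i)) := by
  rw [Afac_neg_append_mul_Afac_append]
  simp only [sum_sign_sub_sign_eq_indicator_iUnion hxx' hchain (hz _),
    exp_mul_indicator_two_div_two]

lemma Fin.append_comp_permCongr_sumCongr {α : Type*} {m n : ℕ} (σ : Equiv.Perm (Fin m))
    (z : Fin m → α) (x : Fin n → α) :
    Fin.append z x ∘ finSumFinEquiv.permCongr (σ.sumCongr (Equiv.refl (Fin n))) =
      Fin.append (z ∘ σ) x := by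
  ext i
  refine Fin.addCases (fun a => ?_) (fun b => ?_) i <;> simp [Equiv.permCongr_apply]

lemma setIntegral_univ_pi_comp_perm {ι β E : Type*} [Fintype ι] [MeasureSpace β]
    [SigmaFinite (volume : Measure β)] [NormedAddCommGroup E] [NormedSpace ℝ E]
    {f : (ι → β) → E} (hf : ∀ (σ : Equiv.Perm ι) z, f (z ∘ σ) = f z) (σ : Equiv.Perm ι)
    (s : ι → Set β) :
    ∫ z in Set.univ.pi (s ∘ σ), f z = ∫ z in Set.univ.pi s, f z := by
  let T := MeasurableEquiv.piCongrLeft (fun _ : ι => β) σ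
  have hT : ∀ z, T z = z ∘ σ.symm := fun z => funext fun i => by
    rw [MeasurableEquiv.coe_piCongrLeft]
    simpa using Equiv.piCongrLeft_apply_apply (fun _ => β) σ z (σ.symm i)
  calc ∫ z in Set.univ.pi (s ∘ σ), f z = ∫ z in T ⁻¹' Set.univ.pi s, f (T z) := by
        simp only [hT, hf]
        rw [MeasurableEquiv.coe_piCongrLeft, Equiv.piCongrLeft_preimage_univ_pi]
        rfl
    _ = ∫ z in Set.univ.pi s, f z :=
        (volume_measurePreserving_piCongrLeft (fun _ => β) σ).setIntegral_preimage_emb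
          T.measurableEmbedding f _

lemma setIntegral_univ_pi_ite_mem_eq_ite_lt_card {m : ℕ} {β E : Type*} [MeasureSpace β]
    [SigmaFinite (volume : Measure β)] [NormedAddCommGroup E] [NormedSpace ℝ E]
    {f : (Fin m → β) → E} (hf : ∀ (σ : Equiv.Perm (Fin m)) z, f (z ∘ σ) = f z) (I V : Set β)
    (t : Finset (Fin m)) :
    ∫ z in Set.univ.pi (fun i => if i ∈ t then I else V), f z =
      ∫ z in Set.univ.pi (fun i : Fin m => if (i : ℕ) < #t then I else V), f z := by
  have hcard : #{i : Fin m | (i : ℕ) < #t} = #t := by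
    rw [Fin.card_filter_val_lt, min_eq_right (card_le_univ t |>.trans_eq (Fintype.card_fin m))]
  obtain ⟨σ, hσ⟩ := Equiv.Perm.exists_map_finset_eq _ _ hcard
  have hmem : ∀ i, σ i ∈ t ↔ (i : ℕ) < #t := fun i => by
    rw [← hσ, mem_map_equiv]; simp [hcard]
  rw [← setIntegral_univ_pi_comp_perm hf σ]
  simp only [comp_def, hmem]

lemma prod_indicator_mul_eq_indicator_pi {ι α M : Type*} [CommMonoidWithZero M] (I : Set α)
    (t : Finset ι) (f : (ι → α) → M) (z : ι → α) :
    (∏ i ∈ t, I.indicator 1 (z i)) * f z = (Set.pi (t : Set ι) fun _ => I).indicator f z := by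
  by_cases hz : z ∈ Set.pi (t : Set ι) fun _ => I
  · rw [Set.indicator_of_mem hz, prod_eq_one fun i hi => Set.indicator_of_mem (hz i hi) 1,
      one_mul]
  · obtain ⟨i, hi, hzi⟩ : ∃ i ∈ t, z i ∉ I := by simpa [Set.mem_pi] using hz
    rw [Set.indicator_of_notMem hz, prod_eq_zero hi (Set.indicator_of_notMem hzi 1), zero_mul]

lemma setIntegral_prod_indicator_mul {ι α 𝕜 : Type*} [MeasurableSpace α] [DecidableEq ι]
    [RCLike 𝕜] (μ : Measure (ι → α)) {I V : Set α} (hI : MeasurableSet I) (hIV : I ⊆ V)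
    (f : (ι → α) → 𝕜) (t : Finset ι) :
    ∫ z in Set.univ.pi (fun _ => V), (∏ i ∈ t, I.indicator 1 (z i)) * f z ∂μ =
      ∫ z in Set.univ.pi (fun i => if i ∈ t then I else V), f z ∂μ := by
  have hB : MeasurableSet (Set.pi (t : Set ι) fun _ => I) :=
    .pi t.countable_toSet fun _ _ => hI
  have h_inter : (Set.pi (t : Set ι) fun _ => I) ∩ Set.univ.pi (fun _ => V) =
      Set.univ.pi (fun i => if i ∈ t then I else V) := by
    ext z
    simp only [Set.mem_inter_iff, Set.mem_pi, Set.mem_univ, true_imp_iff, Finset.mem_coe,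
      ← forall_and]
    refine forall_congr' fun i => ?_
    split_ifs with hi
    · exact ⟨fun h => h.1 hi, fun h => ⟨fun _ => h, hIV h⟩⟩
    · exact ⟨fun h => h.2, fun h => ⟨fun h' => absurd h' hi, h⟩⟩
  simp only [prod_indicator_mul_eq_indicator_pi]
  rw [integral_indicator hB, Measure.restrict_restrict hB, h_inter]

lemma setIntegral_prod_one_add_indicator_mul {m : ℕ} {β 𝕜 : Type*} [MeasureSpace β]
    [SigmaFinite (volume : Measure β)] [RCLike 𝕜] {I V : Set β} (hI : MeasurableSet I)
    (hIV : I ⊆ V) {f : (Fin m → β) → 𝕜} (hf : ∀ (σ : Equiv.Perm (Fin m)) z, f (z ∘ σ) = f z)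
    (hfi : IntegrableOn f (Set.univ.pi fun _ => V)) (c : 𝕜) :
    ∫ z in Set.univ.pi (fun _ => V), (∏ i, (1 + c * I.indicator 1 (z i))) * f z =
      ∑ j ∈ range (m + 1), c ^ j * m.choose j *
        ∫ z in Set.univ.pi (fun i : Fin m => if (i : ℕ) < j then I else V), f z := by
  classical
  have h_expand : ∀ z : Fin m → β, (∏ i, (1 + c * I.indicator 1 (z i))) * f z =
      ∑ t ∈ univ.powerset, c ^ #t * ((∏ i ∈ t, I.indicator 1 (z i)) * f z) := fun z => by
    rw [prod_one_add, sum_mul]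
    refine sum_congr rfl fun t _ => ?_
    rw [prod_mul_distrib, prod_const, mul_assoc]
  have h_int : ∀ t : Finset (Fin m),
      IntegrableOn (fun z => c ^ #t * ((∏ i ∈ t, I.indicator 1 (z i)) * f z))
        (Set.univ.pi fun _ => V) := fun t => by
    simp only [prod_indicator_mul_eq_indicator_pi]
    exact (hfi.indicator (.pi t.countable_toSet fun _ _ => hI)).const_mul _
  simp only [h_expand]
  rw [integral_finsetSum _ fun t _ => h_int t]
  simp only [integral_const_mul, setIntegral_prod_indicator_mul _ hI hIV,
    setIntegral_univ_pi_ite_mem_eq_ite_lt_card hf]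
  rw [sum_powerset_apply_card (fun j => c ^ j *
    ∫ z in Set.univ.pi (fun i : Fin m => if (i : ℕ) < j then I else V), f z)]
  simp only [card_univ, Fintype.card_fin, nsmul_eq_mul]
  exact sum_congr rfl fun j _ => by ring

theorem anyon_bose_rdm_plus_general (κ L : ℝ) (m n : ℕ)
    (χ : (Fin (m + n) → ℝ) → ℂ) (hcont : Continuous χ)
    (hsym : ∀ (π : Equiv.Perm (Fin (m + n))) (z : Fin (m + n) → ℝ), χ (z ∘ π) = χ z)
    (x x' : Fin n → ℝ)
    (hxV : ∀ j, x j ∈ Set.Icc (-(L / 2)) (L / 2))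
    (hx'V : ∀ j, x' j ∈ Set.Icc (-(L / 2)) (L / 2))
    (hxx' : ∀ j, x j < x' j) (hchain : ∀ j k : Fin n, j < k → x' j < x k) :
    (∫ z in Set.univ.pi (fun _ : Fin m => Set.Icc (-(L / 2)) (L / 2)),
        (starRingEnd ℂ) (Afac κ (Fin.append z x') * χ (Fin.append z x')) *
          (Afac κ (Fin.append z x) * χ (Fin.append z x)))
      = (Afac (-κ) x' * Afac κ x) *
          ∑ j ∈ Finset.range (m + 1),
            (-1) ^ j * (1 - Complex.exp (Complex.I * Real.pi * κ)) ^ j * (m.choose j : ℂ) *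
              ∫ z in Set.univ.pi (fun i : Fin m =>
                  if (i : ℕ) < j then ⋃ l, Set.Icc (x l) (x' l)
                  else Set.Icc (-(L / 2)) (L / 2)),
                (starRingEnd ℂ) (χ (Fin.append z x')) * χ (Fin.append z x) := by
  set Iplus := ⋃ l, Set.Icc (x l) (x' l)
  set V := Set.Icc (-(L / 2)) (L / 2)
  set f : (Fin m → ℝ) → ℂ := fun z => (starRingEnd ℂ) (χ (Fin.append z x')) * χ (Fin.append z x)
  have hf_sym : ∀ (σ : Equiv.Perm (Fin m)) z, f (z ∘ σ) = f z := fun σ z => by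
    simp only [f, ← Fin.append_comp_permCongr_sumCongr, hsym]
  have hf_int : IntegrableOn f (Set.univ.pi fun _ => V) :=
    (by fun_prop : Continuous f).continuousOn.integrableOn_compact
      (isCompact_univ_pi fun _ => isCompact_Icc)
  have hIV : Iplus ⊆ V := Set.iUnion_subset fun l => Set.Icc_subset_Icc (hxV l).1 (hx'V l).2
  have h_generic : ∀ᵐ z : Fin m → ℝ, ∀ i l, z i ≠ x l ∧ z i ≠ x' l := by
    simp only [ae_all_iff, Filter.eventually_and]
    exact fun i l => ⟨Measure.ae_eval_ne _ i _, Measure.ae_eval_ne _ i _⟩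
  calc _ = ∫ z in Set.univ.pi (fun _ => V), Afac (-κ) x' * Afac κ x *
        ((∏ i, (1 + (exp (I * Real.pi * κ) - 1) * Iplus.indicator 1 (z i))) * f z) := by
        refine setIntegral_congr_ae (MeasurableSet.univ_pi fun _ => measurableSet_Icc) ?_
        filter_upwards [h_generic] with z hz _
        rw [map_mul, conj_Afac, mul_mul_mul_comm,
          Afac_neg_append_mul_Afac_append_of_chain κ z hxx' hchain hz, mul_assoc]
    _ = _ := by
        rw [integral_const_mul, setIntegral_prod_one_add_indicator_mul
          (.iUnion fun _ => measurableSet_Icc) hIV hf_sym hf_int]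
        congr 1
        refine sum_congr rfl fun j _ => ?_
        rw [← neg_sub, neg_pow]

/-- Anyon–Bose expansion of the `n`-particle reduced density matrix, ordering `O₊`
(`x₁ < x₁' < ⋯ < xₙ < xₙ'`, `I₊ = ⋃ₗ [xₗ, xₗ']`), with `N = m + n` particles on
`V = [-L/2, L/2]` and `χᵃ = A_κ χ` for a continuous totally symmetric `χ`. -/
theorem anyon_bose_rdm_plus (κ L : ℝ) (hL : 0 < L) (m n : ℕ) (hn : 1 ≤ n)
    (χ : (Fin (m + n) → ℝ) → ℂ) (hcont : Continuous χ)
    (hsym : ∀ (π : Equiv.Perm (Fin (m + n))) (z : Fin (m + n) → ℝ), χ (z ∘ π) = χ z)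
    (x x' : Fin n → ℝ)
    (hxV : ∀ j, x j ∈ Set.Icc (-(L / 2)) (L / 2))
    (hx'V : ∀ j, x' j ∈ Set.Icc (-(L / 2)) (L / 2))
    (hxx' : ∀ j, x j < x' j) (hchain : ∀ j k : Fin n, j < k → x' j < x k) :
    (∫ z in Set.univ.pi (fun _ : Fin m => Set.Icc (-(L / 2)) (L / 2)),
        (starRingEnd ℂ) (Afac κ (Fin.append z x') * χ (Fin.append z x')) *
          (Afac κ (Fin.append z x) * χ (Fin.append z x)))
      = (Afac (-κ) x' * Afac κ x) *
          ∑ j ∈ Finset.range (m + 1),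
            (-1) ^ j * (1 - Complex.exp (Complex.I * Real.pi * κ)) ^ j * (m.choose j : ℂ) *
              ∫ z in Set.univ.pi (fun i : Fin m =>
                  if (i : ℕ) < j then ⋃ l, Set.Icc (x l) (x' l)
                  else Set.Icc (-(L / 2)) (L / 2)),
                (starRingEnd ℂ) (χ (Fin.append z x')) * χ (Fin.append z x) :=
  anyon_bose_rdm_plus_general κ L m n χ hcont hsym x x' hxV hx'V hxx' hchain
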